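/- Let G be a connected graph, k ≥ 1 and s ∈ [k]. Two (k,s)-tuples t and u of G receive the same (k,s)-LWL color after i iterations if and only if the depth-i unrolled trees of the (k,s)-tuple graph rooted at t and u, respectively, are isomorphic via a label-preserving isomorphism mapping the root of one to the root of the other. -/

import Mathlib

open SimpleGraph Function
open scoped Classical

noncomputable section

variable {V : Type*} [Fintype V]

/-- A `k`-tuple is a `(k,s)`-tuple if it induces a subgraph with at most `s`
connected components. -/
def IsKS (G : SimpleGraph V) (k s : ℕ) (v : Fin k → V) : Prop :=
  Nat.card (G.induce (Set.range v)).ConnectedComponent ≤ s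

/-- The atomic (isomorphism) type of a `k`-tuple: which entries coincide and which are
adjacent. -/
def atp (G : SimpleGraph V) (k : ℕ) (v : Fin k → V) : Fin k → Fin k → Prop × Prop :=
  fun i j => (v i = v j, G.Adj (v i) (v j))

/-- Colors of the `(k,s)`-LWL after `i` rounds. -/
def LWLColor (k : ℕ) : ℕ → Type _
  | 0 => Fin k → Fin k → Prop × Prop
  | i + 1 => LWLColor k i × (Fin k → Multiset (LWLColor k i))

/-- The `(k,s)`-LWL coloring after `i` rounds: refine by the multisets of colors of the
local `j`-neighbors which are themselves `(k,s)`-tuples. -/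
def lwl (G : SimpleGraph V) (k s : ℕ) : (i : ℕ) → (Fin k → V) → LWLColor k i
  | 0, v => atp G k v
  | i + 1, v =>
    (lwl G k s i v, fun j =>
      ((Finset.univ.filter fun x : V =>
          G.Adj (v j) x ∧ IsKS G k s (Function.update v j x)).val.map
        fun x => lwl G k s i (Function.update v j x)))

/-- Finite rooted directed trees with node labels in `L` and edge labels in `E`. -/
inductive LTree (L E : Type u) : Type u
  | node : L → List (E × LTree L E) → LTree L E

/-- Isomorphism of rooted, labeled directed trees mapping root to root: roots carry
equal labels and the children correspond under a bijection preserving edge labels and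
(recursively) isomorphism of the subtrees. -/
inductive LTree.Iso {L E : Type u} : LTree L E → LTree L E → Prop
  | node (l : L) (cs ds : List (E × LTree L E)) (σ : Fin cs.length ≃ Fin ds.length)
      (hlab : ∀ i : Fin cs.length, (cs.get i).1 = (ds.get (σ i)).1)
      (hiso : ∀ i : Fin cs.length, LTree.Iso (cs.get i).2 (ds.get (σ i)).2) :
      LTree.Iso (.node l cs) (.node l ds)

/-- The unrolled tree of depth `i` of the `(k,s)`-tuple graph around the node
corresponding to the tuple `v`: node labels are atomic types of tuples, edge labels
record the coordinate `j` for which the child is a local `j`-neighbor (restricted to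
`(k,s)`-tuples). -/
def unroll (G : SimpleGraph V) (k s : ℕ) :
    (i : ℕ) → (Fin k → V) → LTree (Fin k → Fin k → Prop × Prop) (Fin k)
  | 0, v => .node (atp G k v) []
  | i + 1, v => .node (atp G k v)
      (((Finset.univ.filter fun p : Fin k × V =>
            G.Adj (v p.1) p.2 ∧ IsKS G k s (Function.update v p.1 p.2)).toList).map
        fun p => (p.1, unroll G k s i (Function.update v p.1 p.2)))

/-!
Both sides unfold along the same recursion. The root label of an unrolled tree is the atomic
type, which every LWL colour remembers, and a root-preserving isomorphism of depth `i + 1` trees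
is a bijection of children preserving edge labels and, by induction, depth-`i` LWL colours. Such
a bijection exists iff the multisets of pairs `(j, colour)` over the local neighbours agree,
i.e. iff the per-coordinate multisets of neighbour colours used by the refinement agree. The
colour of the root itself is recovered from these multisets, since the colours of one round
determine those of the previous round.
-/

namespace Multiset

theorem map_univ_eq_map_univ_iff {ι κ γ : Type*} [Fintype ι] [Fintype κ] (f : ι → γ)
    (g : κ → γ) :
    map f Finset.univ.val = map g Finset.univ.val ↔ ∃ σ : ι ≃ κ, ∀ i, f i = g (σ i) := by
  constructor
  · intro h
    have hcard : ∀ c, Fintype.card {i // f i = c} = Fintype.card {j // g j = c} := fun c => by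
      have := congrArg (count c) h
      simp only [count_map] at this
      simpa [Fintype.card_subtype, Finset.card, eq_comm] using this
    exact ⟨(Equiv.sigmaFiberEquiv f).symm.trans <|
        (Equiv.sigmaCongrRight fun c => Fintype.equivOfCardEq (hcard c)).trans
          (Equiv.sigmaFiberEquiv g),
      fun i => (Fintype.equivOfCardEq (hcard _) ⟨i, rfl⟩).prop.symm⟩
  · rintro ⟨σ, hσ⟩
    rw [← map_univ_val_equiv σ, map_map]
    exact congrArg (map · _) (funext hσ)

theorem coe_map_eq_coe_map_iff {α β γ : Type*} (l₁ : List α) (l₂ : List β) (f : α → γ)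
    (g : β → γ) :
    (↑(l₁.map f) : Multiset γ) = ↑(l₂.map g) ↔
      ∃ σ : Fin l₁.length ≃ Fin l₂.length, ∀ n, f (l₁.get n) = g (l₂.get (σ n)) := by
  refine Iff.trans ?_ (map_univ_eq_map_univ_iff (f ∘ l₁.get) (g ∘ l₂.get))
  rw [Fin.univ_val_map, Fin.univ_val_map, ← List.map_ofFn, ← List.map_ofFn, List.ofFn_get,
    List.ofFn_get]

theorem eq_iff_forall_map_snd_filter_fst_eq {ι γ : Type*} [DecidableEq ι]
    {M N : Multiset (ι × γ)} :
    M = N ↔ ∀ j, (M.filter (·.1 = j)).map Prod.snd = (N.filter (·.1 = j)).map Prod.snd := by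
  refine ⟨fun h _ => h ▸ rfl, fun h => ext.mpr fun ⟨j, c⟩ => ?_⟩
  have hfiber (M : Multiset (ι × γ)) :
      count (j, c) M = count c ((M.filter (·.1 = j)).map Prod.snd) := by
    set F := M.filter (·.1 = j)
    have hF : F = (F.map Prod.snd).map (Prod.mk j) := by
      rw [map_map]
      conv_lhs => rw [← map_id F]
      exact map_congr rfl fun p hp => by simp [(of_mem_filter hp).symm]
    calc count (j, c) M = count (j, c) F :=
          (count_filter_of_pos (p := fun q : ι × γ => q.1 = j) rfl).symm
      _ = count (j, c) ((F.map Prod.snd).map (Prod.mk j)) := by rw [← hF]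
      _ = count c (F.map Prod.snd) := count_map_eq_count' _ _ (Prod.mk_right_injective j) _
  rw [hfiber M, hfiber N, h j]

end Multiset

theorem Finset.filter_univ_filter_fst_eq {ι α : Type*} [Fintype ι] [DecidableEq ι] [Fintype α]
    (P : ι × α → Prop) [DecidablePred P] (j : ι) :
    (univ.filter P).filter (·.1 = j)
      = (univ.filter fun x => P (j, x)).map ⟨Prod.mk j, Prod.mk_right_injective j⟩ := by
  ext ⟨a, x⟩
  simp only [mem_filter, mem_univ, true_and, mem_map, Function.Embedding.coeFn_mk, Prod.mk.injEq]
  constructor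
  · rintro ⟨hP, rfl⟩
    exact ⟨x, hP, rfl, rfl⟩
  · rintro ⟨x, hP, rfl, rfl⟩
    exact ⟨hP, rfl⟩

theorem Finset.map_filter_univ_eq_iff_forall_fiber {ι α γ : Type*} [Fintype ι] [DecidableEq ι]
    [Fintype α] (P Q : ι × α → Prop) [DecidablePred P] [DecidablePred Q] (f g : ι × α → γ) :
    (univ.filter P).val.map (fun p => (p.1, f p)) = (univ.filter Q).val.map (fun p => (p.1, g p))
      ↔ ∀ j, (univ.filter fun x => P (j, x)).val.map (fun x => f (j, x))
          = (univ.filter fun x => Q (j, x)).val.map (fun x => g (j, x)) := by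
  have hfiber (P : ι × α → Prop) [DecidablePred P] (f : ι × α → γ) (j : ι) :
      (((univ.filter P).val.map fun p => (p.1, f p)).filter (·.1 = j)).map Prod.snd
        = (univ.filter fun x => P (j, x)).val.map fun x => f (j, x) := by
    rw [Multiset.filter_map, Multiset.map_map]
    simp only [comp_def, ← filter_val, filter_univ_filter_fst_eq, map_val, Multiset.map_map]
    rfl
  rw [Multiset.eq_iff_forall_map_snd_filter_fst_eq]
  simp only [hfiber]

theorem LTree.iso_node_iff {L E : Type u} {a b : L} {cs ds : List (E × LTree L E)} :
    LTree.Iso (.node a cs) (.node b ds) ↔ a = b ∧ ∃ σ : Fin cs.length ≃ Fin ds.length,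
      ∀ n, (cs.get n).1 = (ds.get (σ n)).1 ∧ LTree.Iso (cs.get n).2 (ds.get (σ n)).2 := by
  constructor
  · rintro ⟨_, _, _, σ, hlab, hiso⟩
    exact ⟨rfl, σ, fun n => ⟨hlab n, hiso n⟩⟩
  · rintro ⟨rfl, σ, h⟩
    exact .node a cs ds σ (fun n => (h n).1) (fun n => (h n).2)

theorem List.exists_equiv_get_map_iff {α β γ δ : Type*} {l₁ : List α} {l₂ : List β}
    (f : α → γ) (g : β → δ) (r : γ → δ → Prop) :
    (∃ σ : Fin (l₁.map f).length ≃ Fin (l₂.map g).length,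
        ∀ n, r ((l₁.map f).get n) ((l₂.map g).get (σ n))) ↔
      ∃ σ : Fin l₁.length ≃ Fin l₂.length, ∀ n, r (f (l₁.get n)) (g (l₂.get (σ n))) := by
  have h₁ := l₁.length_map f
  have h₂ := l₂.length_map g
  rw [← ((finCongr h₁).equivCongr (finCongr h₂)).exists_congr_right]
  refine exists_congr fun σ => (finCongr h₁).symm.forall_congr_right.symm.trans ?_
  simp

theorem LTree.iso_node_map_iff {L E : Type u} {α β : Type*} {a b : L} {l₁ : List α}
    {l₂ : List β} {f₁ : α → E × LTree L E} {f₂ : β → E × LTree L E} :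
    LTree.Iso (.node a (l₁.map f₁)) (.node b (l₂.map f₂)) ↔
      a = b ∧ ∃ σ : Fin l₁.length ≃ Fin l₂.length, ∀ n,
        (f₁ (l₁.get n)).1 = (f₂ (l₂.get (σ n))).1 ∧
          LTree.Iso (f₁ (l₁.get n)).2 (f₂ (l₂.get (σ n))).2 := by
  rw [iso_node_iff, List.exists_equiv_get_map_iff f₁ f₂ fun c d => c.1 = d.1 ∧ Iso c.2 d.2]

section LocalWL

variable (G : SimpleGraph V) (k s : ℕ)

/-- The pair `(j, x)` stands for the local `j`-neighbour `update v j x` of `v` in the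
`(k,s)`-tuple graph. -/
def localNeighbors (v : Fin k → V) : Finset (Fin k × V) :=
  Finset.univ.filter fun p => G.Adj (v p.1) p.2 ∧ IsKS G k s (update v p.1 p.2)

def lwlNeighborColors (i : ℕ) (v : Fin k → V) (j : Fin k) : Multiset (LWLColor k i) :=
  (Finset.univ.filter fun x => G.Adj (v j) x ∧ IsKS G k s (update v j x)).val.map
    fun x => lwl G k s i (update v j x)

theorem unroll_succ (i : ℕ) (v : Fin k → V) :
    unroll G k s (i + 1) v = .node (atp G k v)
      ((localNeighbors G k s v).toList.map fun p => (p.1, unroll G k s i (update v p.1 p.2))) :=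
  rfl

theorem lwl_succ_eq_iff (i : ℕ) (v w : Fin k → V) :
    lwl G k s (i + 1) v = lwl G k s (i + 1) w ↔
      lwl G k s i v = lwl G k s i w ∧ lwlNeighborColors G k s i v = lwlNeighborColors G k s i w :=
  Prod.ext_iff

theorem map_fst_lwlNeighborColors (i : ℕ) (v : Fin k → V) (j : Fin k) :
    (lwlNeighborColors G k s (i + 1) v j).map Prod.fst = lwlNeighborColors G k s i v j :=
  Multiset.map_map _ _ _

variable {G k s}

theorem lwl_succ_eq_iff_atp {i : ℕ} {v w : Fin k → V} :
    lwl G k s (i + 1) v = lwl G k s (i + 1) w ↔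
      atp G k v = atp G k w ∧ lwlNeighborColors G k s i v = lwlNeighborColors G k s i w := by
  induction i with
  | zero => exact lwl_succ_eq_iff G k s 0 v w
  | succ i ih =>
    rw [lwl_succ_eq_iff, ih]
    refine ⟨fun ⟨⟨hatp, _⟩, hnbr⟩ => ⟨hatp, hnbr⟩, fun ⟨hatp, hnbr⟩ => ⟨⟨hatp, ?_⟩, hnbr⟩⟩
    funext j
    rw [← map_fst_lwlNeighborColors G k s i v, ← map_fst_lwlNeighborColors G k s i w, hnbr]

theorem lwlNeighborColors_eq_iff {i : ℕ} {v w : Fin k → V} :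
    lwlNeighborColors G k s i v = lwlNeighborColors G k s i w ↔
      (localNeighbors G k s v).val.map (fun p => (p.1, lwl G k s i (update v p.1 p.2)))
        = (localNeighbors G k s w).val.map (fun p => (p.1, lwl G k s i (update w p.1 p.2))) := by
  rw [funext_iff, localNeighbors, localNeighbors, Finset.map_filter_univ_eq_iff_forall_fiber]
  rfl

end LocalWL

theorem lwl_iff_unrolledTree_iso_general (G : SimpleGraph V) (k s : ℕ)
    (i : ℕ) (t u : Fin k → V) :
    lwl G k s i t = lwl G k s i u ↔ LTree.Iso (unroll G k s i t) (unroll G k s i u) := by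
  induction i generalizing t u with
  | zero =>
    rw [unroll, unroll, LTree.iso_node_iff]
    exact ⟨fun h => ⟨h, Equiv.refl _, fun n => n.elim0⟩, fun h => h.1⟩
  | succ i ih =>
    rw [lwl_succ_eq_iff_atp, lwlNeighborColors_eq_iff, unroll_succ, unroll_succ,
      LTree.iso_node_map_iff, ← Finset.coe_toList (localNeighbors G k s t),
      ← Finset.coe_toList (localNeighbors G k s u), Multiset.map_coe, Multiset.map_coe,
      Multiset.coe_map_eq_coe_map_iff]
    simp only [ih, Prod.ext_iff]

/-- Let `G` be a connected graph, `k ≥ 1` and `s ∈ [k]`. Two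
`(k,s)`-tuples `t` and `u` get the same `(k,s)`-LWL color after `i` rounds if and only
if the depth-`i` unrolled trees of the `(k,s)`-tuple graph rooted at `t` and at `u` are
isomorphic via a label-preserving isomorphism matching the roots. -/
theorem lwl_iff_unrolledTree_iso (G : SimpleGraph V) (hG : G.Connected) (k s : ℕ)
    (hk : 1 ≤ k) (hs1 : 1 ≤ s) (hsk : s ≤ k)
    (i : ℕ) (t u : Fin k → V) (ht : IsKS G k s t) (hu : IsKS G k s u) :
    lwl G k s i t = lwl G k s i u ↔ LTree.Iso (unroll G k s i t) (unroll G k s i u) :=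
  lwl_iff_unrolledTree_iso_general G k s i t u

end
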